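/- Suppose ~ is a closed equivalence relation on S² whose classes are the fibers of a continuous surjection π : S² → Y onto a Hausdorff space Y. If there exists a homeomorphism h : Y → S² such that h ∘ π is a uniform limit of homeomorphisms S² → S², then each equivalence class of ~ is compact, connected, and non-separating (its complement in S² is connected). -/

import Mathlib

open Metric Filter

/-- The 2-sphere. -/
abbrev Sph : Type := Metric.sphere (0 : EuclideanSpace ℝ (Fin 3)) 1

open scoped RealInnerProductSpace

lemma key_ineq (s t D : ℝ) (hs1 : -1 ≤ s) (hs2 : s ≤ 1) (ht : 0 ≤ t) (hD1 : D ≤ 1)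
    (hD2 : 1 - 2*t ≤ D) : s * D ≤ (1-t)*s + t := by
  nlinarith [mul_nonneg (by linarith : (0:ℝ) ≤ 1 - s) (by linarith : (0:ℝ) ≤ t - (1 - t - D)),
    mul_nonneg (by linarith : (0:ℝ) ≤ 1 + s) (by linarith : (0:ℝ) ≤ t + (1 - t - D))]

lemma arc_exists (c x : EuclideanSpace ℝ (Fin 3)) (hc : ‖c‖ = 1) (hx : ‖x‖ = 1)
    (hxc : x ≠ -c) :
    ∃ T : Set (EuclideanSpace ℝ (Fin 3)), IsPreconnected T ∧ x ∈ T ∧ c ∈ T ∧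
      ∀ w ∈ T, ‖w‖ = 1 ∧ dist w c ≤ dist x c ∧ dist x (-c) ≤ dist w (-c) := by
  set v : ℝ → EuclideanSpace ℝ (Fin 3) := fun t => (1-t) • x + t • c with hv
  have hvne : ∀ t ∈ Set.Icc (0:ℝ) 1, v t ≠ 0 := by
    intro t ht h0
    obtain ⟨ht0, ht1⟩ := ht
    have h1 : (1-t) • x = -(t • c) := by
      rw [eq_neg_iff_add_eq_zero]; exact h0
    have h2 : ‖(1-t) • x‖ = ‖t • c‖ := by rw [h1, norm_neg]
    rw [norm_smul, norm_smul, hx, hc] at h2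
    simp only [Real.norm_eq_abs, mul_one] at h2
    rw [abs_of_nonneg (by linarith), abs_of_nonneg ht0] at h2
    have ht' : t = 1/2 := by linarith
    apply hxc
    subst ht'
    norm_num at h1
    have h3 := congrArg (fun w : EuclideanSpace ℝ (Fin 3) => (2:ℝ) • w) h1
    simp only [smul_smul, smul_neg] at h3
    norm_num at h3
    exact h3
  set γ : ℝ → EuclideanSpace ℝ (Fin 3) := fun t => ‖v t‖⁻¹ • v t with hγ
  have hcont : ContinuousOn γ (Set.Icc 0 1) := by
    have hvc : Continuous v := by continuity
    exact ((hvc.norm.continuousOn.inv₀ (fun t ht => by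
      simpa using norm_ne_zero_iff.mpr (hvne t ht))).smul hvc.continuousOn)
  refine ⟨γ '' Set.Icc 0 1, (isPreconnected_Icc).image γ hcont, ?_, ?_, ?_⟩
  · exact ⟨0, by simp, by simp [hγ, hv, hx]⟩
  · exact ⟨1, by simp, by simp [hγ, hv, hc]⟩
  · rintro w ⟨t, ht, rfl⟩
    obtain ⟨ht0, ht1⟩ := ht
    have hvt := hvne t ⟨ht0, ht1⟩
    have hD0 : 0 < ‖v t‖ := norm_pos_iff.mpr hvt
    have hw1 : ‖γ t‖ = 1 := norm_smul_inv_norm (𝕜 := ℝ) hvt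
    -- inner product estimate
    have hs2 : (inner ℝ x c : ℝ) ≤ 1 := by
      have := real_inner_le_norm x c
      rwa [hx, hc, one_mul] at this
    have hs1 : -1 ≤ (inner ℝ x c : ℝ) := by
      have := real_inner_le_norm (-x) c
      rw [norm_neg, hx, hc, one_mul, inner_neg_left] at this
      linarith
    have hD1 : ‖v t‖ ≤ 1 := by
      calc ‖v t‖ ≤ ‖(1-t) • x‖ + ‖t • c‖ := norm_add_le _ _
        _ = (1-t) + t := by
            rw [norm_smul, norm_smul, hx, hc]
            simp [Real.norm_eq_abs, abs_of_nonneg, ht0, abs_of_nonneg (by linarith : (0:ℝ) ≤ 1 - t)]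
        _ = 1 := by ring
    have hD2 : 1 - 2*t ≤ ‖v t‖ := by
      have := norm_sub_norm_le ((1-t) • x) (-(t • c))
      rw [norm_neg, sub_neg_eq_add] at this
      rw [norm_smul, norm_smul, hx, hc] at this
      simp only [Real.norm_eq_abs, mul_one] at this
      rw [abs_of_nonneg (by linarith : (0:ℝ) ≤ 1 - t), abs_of_nonneg ht0] at this
      calc 1 - 2*t = (1-t) - t := by ring
        _ ≤ ‖v t‖ := this
    have hinner : (inner ℝ x c : ℝ) ≤ (inner ℝ (γ t) c : ℝ) := by
      have hval : (inner ℝ (γ t) c : ℝ) = ((1-t) * (inner ℝ x c : ℝ) + t) / ‖v t‖ := by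
        rw [hγ]
        simp only [hv, inner_smul_left, inner_add_left, real_inner_smul_left]
        rw [real_inner_self_eq_norm_sq c, hc]
        simp only [starRingEnd_apply, star_trivial]
        ring
      rw [hval, le_div_iff₀ hD0]
      have := key_ineq (inner ℝ x c : ℝ) t ‖v t‖ hs1 hs2 ht0 hD1 hD2
      linarith [this]
    refine ⟨hw1, ?_, ?_⟩
    · have hsq : dist (γ t) c ^ 2 ≤ dist x c ^ 2 := by
        rw [dist_eq_norm, dist_eq_norm, norm_sub_sq_real, norm_sub_sq_real, hw1, hx, hc]
        linarith
      calc dist (γ t) c = Real.sqrt (dist (γ t) c ^ 2) := by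
            rw [Real.sqrt_sq dist_nonneg]
        _ ≤ Real.sqrt (dist x c ^ 2) := Real.sqrt_le_sqrt hsq
        _ = dist x c := Real.sqrt_sq dist_nonneg
    · have hnc : ‖-c‖ = 1 := by rwa [norm_neg]
      have hsq : dist x (-c) ^ 2 ≤ dist (γ t) (-c) ^ 2 := by
        rw [dist_eq_norm, dist_eq_norm, norm_sub_sq_real, norm_sub_sq_real, hw1, hx, hnc,
          inner_neg_right, inner_neg_right]
        linarith
      calc dist x (-c) = Real.sqrt (dist x (-c) ^ 2) := by rw [Real.sqrt_sq dist_nonneg]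
        _ ≤ Real.sqrt (dist (γ t) (-c) ^ 2) := Real.sqrt_le_sqrt hsq
        _ = dist (γ t) (-c) := Real.sqrt_sq dist_nonneg

lemma cap_preconnected (c : EuclideanSpace ℝ (Fin 3)) (hc : ‖c‖ = 1) (ρ : ℝ)
    (hρ : ρ < 2) :
    IsPreconnected {w : Sph | dist (w : EuclideanSpace ℝ (Fin 3)) c ≤ ρ} := by
  rw [← Topology.IsInducing.subtypeVal.isPreconnected_image]
  have hdcc : dist (-c) c = 2 := by
    have h1 : (-c) - c = (-2 : ℝ) • c := by module
    rw [dist_eq_norm, h1, norm_smul, hc]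
    norm_num
  have himg : Subtype.val '' {w : Sph | dist (w : EuclideanSpace ℝ (Fin 3)) c ≤ ρ}
      = {w : EuclideanSpace ℝ (Fin 3) | ‖w‖ = 1 ∧ dist w c ≤ ρ} := by
    ext w
    constructor
    · rintro ⟨⟨w', hw'⟩, hmem, rfl⟩
      exact ⟨mem_sphere_zero_iff_norm.mp hw', hmem⟩
    · rintro ⟨hw1, hw2⟩
      exact ⟨⟨w, mem_sphere_zero_iff_norm.mpr hw1⟩, hw2, rfl⟩
  rw [himg]
  apply isPreconnected_of_forall c
  rintro y ⟨hy1, hy2⟩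
  have hync : y ≠ -c := by
    rintro rfl
    rw [hdcc] at hy2; linarith
  obtain ⟨T, hTpc, hyT, hcT, hT⟩ := arc_exists c y hc hy1 hync
  exact ⟨T, fun w hw => ⟨(hT w hw).1, le_trans (hT w hw).2.1 hy2⟩, hcT, hyT, hTpc⟩

lemma anticap_preconnected (b : EuclideanSpace ℝ (Fin 3)) (hb : ‖b‖ = 1) (δ : ℝ)
    (hδ0 : 0 < δ) (hδ2 : δ < 2) :
    IsPreconnected {w : Sph | δ < dist (w : EuclideanSpace ℝ (Fin 3)) b} := by
  rw [← Topology.IsInducing.subtypeVal.isPreconnected_image]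
  have himg : Subtype.val '' {w : Sph | δ < dist (w : EuclideanSpace ℝ (Fin 3)) b}
      = {w : EuclideanSpace ℝ (Fin 3) | ‖w‖ = 1 ∧ δ < dist w b} := by
    ext w
    constructor
    · rintro ⟨⟨w', hw'⟩, hmem, rfl⟩
      exact ⟨mem_sphere_zero_iff_norm.mp hw', hmem⟩
    · rintro ⟨hw1, hw2⟩
      exact ⟨⟨w, mem_sphere_zero_iff_norm.mpr hw1⟩, hw2, rfl⟩
  rw [himg]
  apply isPreconnected_of_forall (-b)
  rintro y ⟨hy1, hy2⟩
  have hynb : y ≠ -(-b) := by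
    rw [neg_neg]
    rintro rfl
    simp at hy2; linarith
  obtain ⟨T, hTpc, hyT, hcT, hT⟩ := arc_exists (-b) y (by rwa [norm_neg]) hy1 hynb
  refine ⟨T, fun w hw => ⟨(hT w hw).1, ?_⟩, hcT, hyT, hTpc⟩
  have := (hT w hw).2.2
  rw [neg_neg] at this
  exact lt_of_lt_of_le hy2 this

/-- The easier direction of Moore's theorem: if `~` is a closed equivalence
relation on `S²` whose classes are the fibers of a continuous surjection
`π : S² → Y` onto a Hausdorff space, and there is a homeomorphism `h : Y → S²`
such that `h ∘ π` is a uniform limit of homeomorphisms of `S²`, then every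
equivalence class is compact, connected, and non-separating. -/
theorem stmt17 (Y : Type*) [TopologicalSpace Y] [T2Space Y]
    (π : Sph → Y) (hπc : Continuous π) (hπs : Function.Surjective π)
    (hclosed : IsClosed {p : Sph × Sph | π p.1 = π p.2})
    (h : Y ≃ₜ Sph) (g : ℕ → Sph ≃ₜ Sph)
    (hunif : TendstoUniformly (fun n x => g n x) (fun x => h (π x)) atTop) :
    ∀ y : Y, IsCompact (π ⁻¹' {y}) ∧ IsConnected (π ⁻¹' {y}) ∧
      IsConnected ((π ⁻¹' {y})ᶜ) := by
  intro y
  set f : Sph → Sph := fun x => h (π x) with hfdef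
  have hfc : Continuous f := h.continuous.comp hπc
  set z : Sph := h y with hzdef
  have hzn : ‖(z : EuclideanSpace ℝ (Fin 3))‖ = 1 := mem_sphere_zero_iff_norm.mp z.2
  have hfiber : π ⁻¹' {y} = f ⁻¹' {z} := by
    ext x
    simp only [Set.mem_preimage, Set.mem_singleton_iff, hfdef, hzdef]
    exact ⟨fun hh => by rw [hh], fun hh => h.injective hh⟩
  have hU : ∀ ε > (0:ℝ), ∃ n, ∀ x, dist (f x) (g n x) < ε := by
    intro ε hε
    exact ((Metric.tendstoUniformly_iff.mp hunif) ε hε).exists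
  have hFcl : IsClosed (f ⁻¹' {z}) := isClosed_singleton.preimage hfc
  have hFc : IsCompact (π ⁻¹' {y}) := by rw [hfiber]; exact hFcl.isCompact
  have hFne : (π ⁻¹' {y}).Nonempty := hπs y
  -- a useful way to rewrite preimages under `g n` as images
  have hpreim : ∀ (n : ℕ) (S : Set Sph), (fun x => (g n) x) ⁻¹' S = (g n).symm '' S := by
    intro n S
    ext x
    simp only [Set.mem_image, Set.mem_preimage]
    constructor
    · intro hx; exact ⟨(g n) x, hx, (g n).symm_apply_apply x⟩
    · rintro ⟨w, hw, rfl⟩; simpa using hw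
  refine ⟨hFc, ?_, ?_⟩
  · -- connectedness of the fiber
    rw [hfiber] at hFne ⊢
    refine ⟨hFne, ?_⟩
    rintro u v hu hv hsub ⟨a, haF, hau⟩ ⟨b, hbF, hbv⟩
    by_contra hemp
    rw [Set.not_nonempty_iff_eq_empty] at hemp
    set A : Set Sph := f ⁻¹' {z} ∩ u with hA
    set B : Set Sph := f ⁻¹' {z} ∩ v with hB
    have hAeq : A = f ⁻¹' {z} ∩ vᶜ := by
      ext x
      simp only [hA, Set.mem_inter_iff, Set.mem_compl_iff]
      constructor
      · rintro ⟨hxF, hxu⟩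
        refine ⟨hxF, fun hxv => ?_⟩
        have hmem : x ∈ f ⁻¹' {z} ∩ (u ∩ v) := ⟨hxF, hxu, hxv⟩
        rw [hemp] at hmem
        exact hmem
      · rintro ⟨hxF, hxv⟩
        exact ⟨hxF, (hsub hxF).resolve_right hxv⟩
    have hBeq : B = f ⁻¹' {z} ∩ uᶜ := by
      ext x
      simp only [hB, Set.mem_inter_iff, Set.mem_compl_iff]
      constructor
      · rintro ⟨hxF, hxv⟩
        refine ⟨hxF, fun hxu => ?_⟩
        have hmem : x ∈ f ⁻¹' {z} ∩ (u ∩ v) := ⟨hxF, hxu, hxv⟩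
        rw [hemp] at hmem
        exact hmem
      · rintro ⟨hxF, hxu⟩
        exact ⟨hxF, (hsub hxF).resolve_left hxu⟩
    have hAcomp : IsCompact A := by
      rw [hAeq]; exact (hFcl.inter hv.isClosed_compl).isCompact
    have hBcomp : IsCompact B := by
      rw [hBeq]; exact (hFcl.inter hu.isClosed_compl).isCompact
    have hABdisj : Disjoint A B := by
      rw [Set.disjoint_iff_inter_eq_empty, hAeq, hB]
      ext x
      simp only [Set.mem_inter_iff, Set.mem_compl_iff, Set.mem_empty_iff_false, iff_false]
      rintro ⟨⟨hxF, hxv⟩, hxF', hxv'⟩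
      exact hxv hxv'
    obtain ⟨U, V, hUo, hVo, hAU, hBV, hUV⟩ :=
      SeparatedNhds.of_isCompact_isCompact hAcomp hBcomp hABdisj
    have hFUV : f ⁻¹' {z} ⊆ U ∪ V := by
      intro x hx
      rcases hsub hx with hxu | hxv
      · exact Or.inl (hAU ⟨hx, hxu⟩)
      · exact Or.inr (hBV ⟨hx, hxv⟩)
    -- find r0 such that ball z r0 misses f '' (U ∪ V)ᶜ
    have hScc : IsCompact (f '' (U ∪ V)ᶜ) :=
      ((hUo.union hVo).isClosed_compl.isCompact).image hfc
    have hzout : z ∉ f '' (U ∪ V)ᶜ := by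
      rintro ⟨w, hwSc, hwz⟩
      exact hwSc (hFUV hwz)
    obtain ⟨r0, hr00, hball⟩ := Metric.isOpen_iff.mp hScc.isClosed.isOpen_compl z hzout
    set r : ℝ := min (r0/2) (1/2) with hrdef
    have hr0 : 0 < r := lt_min (by linarith) (by norm_num)
    have hrr0 : r ≤ r0/2 := min_le_left _ _
    have hrhalf : r ≤ 1/2 := min_le_right _ _
    obtain ⟨n, hn⟩ := hU (r/2) (by linarith)
    set capS : Set Sph := {w : Sph | dist (w : EuclideanSpace ℝ (Fin 3)) (z : EuclideanSpace ℝ (Fin 3)) ≤ r} with hcapS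
    set K : Set Sph := (fun x => (g n) x) ⁻¹' capS with hK
    have hKpc : IsPreconnected K := by
      rw [hK, hpreim]
      exact (cap_preconnected (z : EuclideanSpace ℝ (Fin 3)) hzn r (by linarith)).image _
        (g n).symm.continuous.continuousOn
    have hFK : f ⁻¹' {z} ⊆ K := by
      intro x hx
      have hfx : f x = z := hx
      have := hn x
      rw [hfx] at this
      have hd : dist ((g n) x) z ≤ r := by
        rw [dist_comm] at this; linarith
      exact hd
    have hKUV : K ⊆ U ∪ V := by
      intro x hx
      have hd1 : dist ((g n) x) z ≤ r := hx
      have hd2 : dist (f x) ((g n) x) < r/2 := hn x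
      have hd : dist (f x) z < r0 := by
        calc dist (f x) z ≤ dist (f x) ((g n) x) + dist ((g n) x) z := dist_triangle _ _ _
          _ < r/2 + r := by linarith
          _ < r0 := by linarith
      by_contra hxn
      have : f x ∈ f '' (U ∪ V)ᶜ := ⟨x, hxn, rfl⟩
      exact (hball hd) this
    have hfin := hKpc U V hUo hVo hKUV ⟨a, hFK haF, hAU ⟨haF, hau⟩⟩ ⟨b, hFK hbF, hBV ⟨hbF, hbv⟩⟩
    obtain ⟨w, -, hwU, hwV⟩ := hfin
    exact Set.disjoint_iff.mp hUV ⟨hwU, hwV⟩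
  · -- connectedness of the complement
    rw [hfiber]
    have hfs : Function.Surjective f := h.surjective.comp hπs
    -- a point not in the fiber
    have hwz : (⟨-(z : EuclideanSpace ℝ (Fin 3)), by
        simpa [mem_sphere_zero_iff_norm] using hzn⟩ : Sph) ≠ z := by
      intro hcon
      have : -(z : EuclideanSpace ℝ (Fin 3)) = (z : EuclideanSpace ℝ (Fin 3)) :=
        congrArg Subtype.val hcon
      have hz0 : (z : EuclideanSpace ℝ (Fin 3)) = 0 := by
        have h2 := congrArg (fun w => w + (z : EuclideanSpace ℝ (Fin 3))) this
        simp at h2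
        have h3 : (z : EuclideanSpace ℝ (Fin 3)) + (z : EuclideanSpace ℝ (Fin 3)) = 0 := h2.symm
        have h4 : (2:ℝ) • (z : EuclideanSpace ℝ (Fin 3)) = 0 := by rw [two_smul]; exact h3
        have := smul_eq_zero.mp h4
        rcases this with h5 | h5
        · norm_num at h5
        · exact h5
      rw [hz0] at hzn
      simp at hzn
    obtain ⟨x0, hx0⟩ := hfs ⟨-(z : EuclideanSpace ℝ (Fin 3)), by
      simpa [mem_sphere_zero_iff_norm] using hzn⟩
    have hx0F : x0 ∈ (f ⁻¹' {z})ᶜ := by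
      simp only [Set.mem_compl_iff, Set.mem_preimage, Set.mem_singleton_iff]
      rw [hx0]
      exact hwz
    refine ⟨⟨x0, hx0F⟩, isPreconnected_of_forall_pair ?_⟩
    intro a ha b hb
    have hfa : f a ≠ z := ha
    have hfb : f b ≠ z := hb
    have hda : 0 < dist (f a) z := dist_pos.mpr hfa
    have hdb : 0 < dist (f b) z := dist_pos.mpr hfb
    set r : ℝ := min (min (dist (f a) z) (dist (f b) z)) 1 with hrdef
    have hr0 : 0 < r := lt_min (lt_min hda hdb) one_pos
    have hr1 : r ≤ 1 := min_le_right _ _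
    have hra : r ≤ dist (f a) z := le_trans (min_le_left _ _) (min_le_left _ _)
    have hrb : r ≤ dist (f b) z := le_trans (min_le_left _ _) (min_le_right _ _)
    obtain ⟨n, hn⟩ := hU (r/3) (by linarith)
    set acapS : Set Sph := {w : Sph | r/3 < dist (w : EuclideanSpace ℝ (Fin 3)) (z : EuclideanSpace ℝ (Fin 3))} with hacapS
    set C : Set Sph := (fun x => (g n) x) ⁻¹' acapS with hC
    have hCpc : IsPreconnected C := by
      rw [hC, hpreim]
      exact (anticap_preconnected (z : EuclideanSpace ℝ (Fin 3)) hzn (r/3)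
        (by linarith) (by linarith)).image _ (g n).symm.continuous.continuousOn
    have hCsub : C ⊆ (f ⁻¹' {z})ᶜ := by
      intro x hx hxF
      have hfx : f x = z := hxF
      have := hn x
      rw [hfx] at this
      have hd : dist ((g n) x) z < r/3 := by rw [dist_comm] at this; linarith
      have : r/3 < dist ((g n) x) z := hx
      linarith
    have haC : a ∈ C := by
      have h1 := hn a
      have h2 := dist_triangle (f a) ((g n) a) z
      show r/3 < dist ((g n) a) z
      linarith
    have hbC : b ∈ C := by
      have h1 := hn b
      have h2 := dist_triangle (f b) ((g n) b) z
      show r/3 < dist ((g n) b) z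
      linarith
    exact ⟨C, hCsub, haC, hbC, hCpc⟩
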